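/- Weighted subject reduction for system U: if Φ derives Γ ⊢ t : τ in system U and t →w t', then there is a derivation Φ' of Γ ⊢ t' : τ in system U with |Φ| > |Φ'|. -/

import Mathlib

/-! # The Bang Calculus Revisited: common definitions.

Terms are represented with de Bruijn indices, so that all the meta-level
substitutions are capture-avoiding by construction. -/

/-- Terms of the λ!-calculus.  `esub t u` is the explicit substitution
`t[0\u]`: the (anonymous) binder scopes over `t`, not over `u`. -/
inductive Tm : Type
  | var : ℕ → Tm
  | app : Tm → Tm → Tm
  | lam : Tm → Tm
  | bang : Tm → Tm
  | der : Tm → Tm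
  | esub : Tm → Tm → Tm
  deriving DecidableEq

namespace Tm

/-- lifting a renaming under a binder -/
def liftR (f : ℕ → ℕ) : ℕ → ℕ
  | 0 => 0
  | k + 1 => f k + 1

/-- renaming of free variables -/
def rename (f : ℕ → ℕ) : Tm → Tm
  | var k => var (f k)
  | app t u => app (rename f t) (rename f u)
  | lam t => lam (rename (liftR f) t)
  | bang t => bang (rename f t)
  | der t => der (rename f t)
  | esub t u => esub (rename (liftR f) t) (rename f u)

/-- lifting a simultaneous substitution under a binder -/
def liftS (σ : ℕ → Tm) : ℕ → Tm
  | 0 => var 0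
  | k + 1 => rename (· + 1) (σ k)

/-- simultaneous (capture-avoiding) substitution -/
def subst (σ : ℕ → Tm) : Tm → Tm
  | var k => σ k
  | app t u => app (subst σ t) (subst σ u)
  | lam t => lam (subst (liftS σ) t)
  | bang t => bang (subst σ t)
  | der t => der (subst σ t)
  | esub t u => esub (subst (liftS σ) t) (subst σ u)

/-- capture-avoiding substitution of `u` for the variable `0` of `t`,
where the result is placed under `n` extra binders (and `u` already lives
at that depth). -/
def substIn (n : ℕ) (u : Tm) (t : Tm) : Tm :=
  subst (fun k => match k with
    | 0 => u
    | k + 1 => var (k + n)) t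

/-- capture-avoiding meta-level substitution `t{0 := u}` -/
def subst0 (u : Tm) (t : Tm) : Tm := substIn 0 u t

/-- plugging a term into a list context `L ::= ◻ | L[x\t]`; the head of the
list is the argument of the outermost explicit substitution. -/
def plug : List Tm → Tm → Tm
  | [], s => s
  | e :: L, s => esub (plug L s) e

/-- the w-size of a term -/
def wsize : Tm → ℕ
  | var _ => 0
  | app t u => 1 + wsize t + wsize u
  | lam t => 1 + wsize t
  | bang _ => 0
  | der t => 1 + wsize t
  | esub t u => 1 + wsize t + wsize u

end Tm

/-- the names of the three rewriting rules of the λ!-calculus -/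
inductive Rule : Type
  | dB | sb | db
  deriving DecidableEq

open Tm in
/-- the three rewriting rules, applied at the root (at a distance) -/
inductive Root : Rule → Tm → Tm → Prop
  | dB (L : List Tm) (t u : Tm) :
      Root .dB (app (plug L (lam t)) u)
               (plug L (esub t (rename (· + L.length) u)))
  | sb (L : List Tm) (t u : Tm) :
      Root .sb (esub t (plug L (bang u))) (plug L (substIn L.length u t))
  | db (L : List Tm) (t : Tm) :
      Root .db (der (plug L (bang t))) (plug L t)

/-- closure of each rule under weak contexts (no reduction under `bang`) -/
inductive Step : Rule → Tm → Tm → Prop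
  | root {r : Rule} {t t' : Tm} : Root r t t' → Step r t t'
  | appL {r t t'} (u : Tm) : Step r t t' → Step r (Tm.app t u) (Tm.app t' u)
  | appR {r u u'} (t : Tm) : Step r u u' → Step r (Tm.app t u) (Tm.app t u')
  | lam {r t t'} : Step r t t' → Step r (Tm.lam t) (Tm.lam t')
  | der {r t t'} : Step r t t' → Step r (Tm.der t) (Tm.der t')
  | esubL {r t t'} (u : Tm) : Step r t t' → Step r (Tm.esub t u) (Tm.esub t' u)
  | esubR {r u u'} (t : Tm) : Step r u u' → Step r (Tm.esub t u) (Tm.esub t u')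

/-- the weak reduction `→w` of the λ!-calculus -/
def StepW (t t' : Tm) : Prop := ∃ r, Step r t t'

/-- counted weak reduction: `RedCnt t (b, e) u` holds iff `t →w* u` using `b`
dB-steps and `e` steps of kind s!/d!. -/
inductive RedCnt : Tm → ℕ × ℕ → Tm → Prop
  | refl (t : Tm) : RedCnt t (0, 0) t
  | db {t t₁ u : Tm} {b e : ℕ} :
      Step .dB t t₁ → RedCnt t₁ (b, e) u → RedCnt t (b + 1, e) u
  | ex {t t₁ u : Tm} {b e : ℕ} :
      (Step .sb t t₁ ∨ Step .db t t₁) → RedCnt t₁ (b, e) u →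
      RedCnt t (b, e + 1) u

mutual
  /-- neutral w-normal terms -/
  inductive NeW : Tm → Prop
    | var (k : ℕ) : NeW (Tm.var k)
    | app {t u : Tm} : NaW t → NoW u → NeW (Tm.app t u)
    | der {t : Tm} : NbW t → NeW (Tm.der t)
    | esub {t u : Tm} : NeW t → NbW u → NeW (Tm.esub t u)
  /-- neutral-abs w-normal terms -/
  inductive NaW : Tm → Prop
    | bang (t : Tm) : NaW (Tm.bang t)
    | ne {t : Tm} : NeW t → NaW t
    | esub {t u : Tm} : NaW t → NbW u → NaW (Tm.esub t u)
  /-- neutral-bang w-normal terms -/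
  inductive NbW : Tm → Prop
    | ne {t : Tm} : NeW t → NbW t
    | lam {t : Tm} : NoW t → NbW (Tm.lam t)
    | esub {t u : Tm} : NbW t → NbW u → NbW (Tm.esub t u)
  /-- w-normal terms -/
  inductive NoW : Tm → Prop
    | na {t : Tm} : NaW t → NoW t
    | nb {t : Tm} : NbW t → NoW t
end

/-- clashes -/
inductive Clash : Tm → Prop
  | appBang (L : List Tm) (t u : Tm) : Clash (Tm.app (Tm.plug L (Tm.bang t)) u)
  | esubLam (L : List Tm) (t u : Tm) : Clash (Tm.esub t (Tm.plug L (Tm.lam u)))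
  | derLam (L : List Tm) (u : Tm) : Clash (Tm.der (Tm.plug L (Tm.lam u)))
  | appLam (L : List Tm) (t u : Tm) : Clash (Tm.app t (Tm.plug L (Tm.lam u)))

/-- `WSub t s` holds iff `t = W⟨s⟩` for some weak context `W` -/
inductive WSub : Tm → Tm → Prop
  | refl (t : Tm) : WSub t t
  | appL {t s : Tm} (u : Tm) : WSub t s → WSub (Tm.app t u) s
  | appR {u s : Tm} (t : Tm) : WSub u s → WSub (Tm.app t u) s
  | lam {t s : Tm} : WSub t s → WSub (Tm.lam t) s
  | der {t s : Tm} : WSub t s → WSub (Tm.der t) s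
  | esubL {t s : Tm} (u : Tm) : WSub t s → WSub (Tm.esub t u) s
  | esubR {u s : Tm} (t : Tm) : WSub u s → WSub (Tm.esub t u) s

/-- weak clash freeness -/
def Wcf (t : Tm) : Prop := ¬ ∃ s, WSub t s ∧ Clash s

mutual
  /-- neutral weak clash free normal terms -/
  inductive NeCF : Tm → Prop
    | var (k : ℕ) : NeCF (Tm.var k)
    | app {t u : Tm} : NeCF t → NaCF u → NeCF (Tm.app t u)
    | der {t : Tm} : NeCF t → NeCF (Tm.der t)
    | esub {t u : Tm} : NeCF t → NeCF u → NeCF (Tm.esub t u)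
  /-- neutral-abs weak clash free normal terms -/
  inductive NaCF : Tm → Prop
    | bang (t : Tm) : NaCF (Tm.bang t)
    | ne {t : Tm} : NeCF t → NaCF t
    | esub {t u : Tm} : NaCF t → NeCF u → NaCF (Tm.esub t u)
  /-- neutral-bang weak clash free normal terms -/
  inductive NbCF : Tm → Prop
    | ne {t : Tm} : NeCF t → NbCF t
    | lam {t : Tm} : NoCF t → NbCF (Tm.lam t)
    | esub {t u : Tm} : NbCF t → NeCF u → NbCF (Tm.esub t u)
  /-- weak clash free normal terms -/
  inductive NoCF : Tm → Prop
    | na {t : Tm} : NaCF t → NoCF t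
    | nb {t : Tm} : NbCF t → NoCF t
end

/-- Types of system 𝒰: base types, multiset types and arrow types.  A
multiset type is given by a list of types (a representative of the multiset
it determines). -/
inductive Ty : Type
  | base : ℕ → Ty
  | mult : List Ty → Ty
  | arr : List Ty → Ty → Ty

/-- typing contexts: functions from (de Bruijn) variables to multiset types -/
abbrev Ctx := ℕ → Multiset Ty

/-- the context mapping `k` to `M` and anything else to the empty multiset -/
def Ctx.single (k : ℕ) (M : Multiset Ty) : Ctx := fun j => if j = k then M else 0

/-- removing the (type of the) bound variable `0` from a context -/
def Ctx.tail (Γ : Ctx) : Ctx := fun k => Γ (k + 1)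

/-- extending a context with a multiset type for a fresh variable `0` -/
def Ctx.cons (M : Multiset Ty) (Γ : Ctx) : Ctx := fun k =>
  match k with
  | 0 => M
  | k + 1 => Γ k

/-- Sized typing of system 𝒰: `DerU Γ t τ n` means that there is a derivation
of `Γ ⊢ t : τ` whose size (number of rules, not counting `bg`) is `n`. -/
inductive DerU : Ctx → Tm → Ty → ℕ → Prop
  | ax (k : ℕ) (σ : Ty) : DerU (Ctx.single k {σ}) (Tm.var k) σ 1
  | app {Γ Δ : Ctx} {t u : Tm} {M : List Ty} {τ : Ty} {n m : ℕ} :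
      DerU Γ t (Ty.arr M τ) n → DerU Δ u (Ty.mult M) m →
      DerU (Γ + Δ) (Tm.app t u) τ (n + m + 1)
  | abs {Γ : Ctx} {t : Tm} {τ : Ty} {n : ℕ} (M : List Ty) :
      DerU Γ t τ n → Multiset.ofList M = Γ 0 →
      DerU (Ctx.tail Γ) (Tm.lam t) (Ty.arr M τ) (n + 1)
  | es {Γ Δ : Ctx} {t u : Tm} {σ : Ty} {M : List Ty} {n m : ℕ} :
      DerU Γ t σ n → DerU Δ u (Ty.mult M) m → Multiset.ofList M = Γ 0 →
      DerU (Ctx.tail Γ + Δ) (Tm.esub t u) σ (n + m + 1)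
  | bg {t : Tm} (prs : List (Ctx × Ty × ℕ)) :
      (∀ p ∈ prs, DerU p.1 t p.2.1 p.2.2) →
      DerU ((prs.map (·.1)).sum) (Tm.bang t)
           (Ty.mult (prs.map (·.2.1))) ((prs.map (·.2.2)).sum)
  | dr {Γ : Ctx} {t : Tm} {σ : Ty} {n : ℕ} :
      DerU Γ t (Ty.mult [σ]) n → DerU Γ (Tm.der t) σ (n + 1)

/-! ## The source λ-calculus with explicit substitutions (CBN / CBV) -/

/-- terms of the λ-calculus with explicit substitutions (de Bruijn) -/
inductive Lm : Type
  | var : ℕ → Lm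
  | app : Lm → Lm → Lm
  | lam : Lm → Lm
  | esub : Lm → Lm → Lm
  deriving DecidableEq

namespace Lm

def liftR (f : ℕ → ℕ) : ℕ → ℕ
  | 0 => 0
  | k + 1 => f k + 1

def rename (f : ℕ → ℕ) : Lm → Lm
  | var k => var (f k)
  | app t u => app (rename f t) (rename f u)
  | lam t => lam (rename (liftR f) t)
  | esub t u => esub (rename (liftR f) t) (rename f u)

def liftS (σ : ℕ → Lm) : ℕ → Lm
  | 0 => var 0
  | k + 1 => rename (· + 1) (σ k)

def subst (σ : ℕ → Lm) : Lm → Lm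
  | var k => σ k
  | app t u => app (subst σ t) (subst σ u)
  | lam t => lam (subst (liftS σ) t)
  | esub t u => esub (subst (liftS σ) t) (subst σ u)

def substIn (n : ℕ) (u : Lm) (t : Lm) : Lm :=
  subst (fun k => match k with
    | 0 => u
    | k + 1 => var (k + n)) t

/-- capture-avoiding meta-level substitution `t{0 := u}` -/
def subst0 (u : Lm) (t : Lm) : Lm := substIn 0 u t

def plug : List Lm → Lm → Lm
  | [], s => s
  | e :: L, s => esub (plug L s) e

/-- values -/
def IsVal : Lm → Prop
  | var _ => True
  | lam _ => True
  | _ => False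

/-- the n-size of a term -/
def nsize : Lm → ℕ
  | var _ => 0
  | lam t => 1 + nsize t
  | app t _ => 1 + nsize t
  | esub t _ => 1 + nsize t

/-- the v-size of a term -/
def vsize : Lm → ℕ
  | var _ => 0
  | lam _ => 0
  | app t u => 1 + vsize t + vsize u
  | esub t u => 1 + vsize t + vsize u

end Lm

/-- names of the CBN rules -/
inductive NRule : Type
  | dB | s
  deriving DecidableEq

/-- call-by-name reduction (closure of dB and s under CBN contexts) -/
inductive StepN : NRule → Lm → Lm → Prop
  | dB (L : List Lm) (t u : Lm) :
      StepN .dB (Lm.app (Lm.plug L (Lm.lam t)) u)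
                (Lm.plug L (Lm.esub t (Lm.rename (· + L.length) u)))
  | s (t u : Lm) : StepN .s (Lm.esub t u) (Lm.subst0 u t)
  | appL {r t t'} (u : Lm) : StepN r t t' → StepN r (Lm.app t u) (Lm.app t' u)
  | lam {r t t'} : StepN r t t' → StepN r (Lm.lam t) (Lm.lam t')
  | esubL {r t t'} (u : Lm) : StepN r t t' → StepN r (Lm.esub t u) (Lm.esub t' u)

/-- names of the CBV rules -/
inductive VRule : Type
  | dB | sv
  deriving DecidableEq

/-- call-by-value reduction (closure of dB and sv under CBV contexts) -/
inductive StepV : VRule → Lm → Lm → Prop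
  | dB (L : List Lm) (t u : Lm) :
      StepV .dB (Lm.app (Lm.plug L (Lm.lam t)) u)
                (Lm.plug L (Lm.esub t (Lm.rename (· + L.length) u)))
  | sv (L : List Lm) (t v : Lm) (hv : Lm.IsVal v) :
      StepV .sv (Lm.esub t (Lm.plug L v)) (Lm.plug L (Lm.substIn L.length v t))
  | appL {r t t'} (u : Lm) : StepV r t t' → StepV r (Lm.app t u) (Lm.app t' u)
  | appR {r u u'} (t : Lm) : StepV r u u' → StepV r (Lm.app t u) (Lm.app t u')
  | esubL {r t t'} (u : Lm) : StepV r t t' → StepV r (Lm.esub t u) (Lm.esub t' u)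
  | esubR {r u u'} (t : Lm) : StepV r u u' → StepV r (Lm.esub t u) (Lm.esub t u')

mutual
  /-- CBN neutral terms -/
  inductive NeN : Lm → Prop
    | var (k : ℕ) : NeN (Lm.var k)
    | app {t : Lm} (u : Lm) : NeN t → NeN (Lm.app t u)
  /-- CBN normal terms -/
  inductive NoN : Lm → Prop
    | lam {t : Lm} : NoN t → NoN (Lm.lam t)
    | ne {t : Lm} : NeN t → NoN t
end

mutual
  /-- CBV (substituted) variables -/
  inductive VrV : Lm → Prop
    | var (k : ℕ) : VrV (Lm.var k)
    | esub {t u : Lm} : VrV t → NeV u → VrV (Lm.esub t u)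
  /-- CBV neutral terms -/
  inductive NeV : Lm → Prop
    | app₁ {t u : Lm} : VrV t → NoV u → NeV (Lm.app t u)
    | app₂ {t u : Lm} : NeV t → NoV u → NeV (Lm.app t u)
    | esub {t u : Lm} : NeV t → NeV u → NeV (Lm.esub t u)
  /-- CBV normal terms -/
  inductive NoV : Lm → Prop
    | lam (t : Lm) : NoV (Lm.lam t)
    | vr {t : Lm} : VrV t → NoV t
    | ne {t : Lm} : NeV t → NoV t
    | esub {t u : Lm} : NoV t → NeV u → NoV (Lm.esub t u)
end

/-- counted CBN reduction, recording the number of dB- and s-steps -/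
inductive RedCntN : Lm → ℕ × ℕ → Lm → Prop
  | refl (t : Lm) : RedCntN t (0, 0) t
  | db {t t₁ u : Lm} {b e : ℕ} :
      StepN .dB t t₁ → RedCntN t₁ (b, e) u → RedCntN t (b + 1, e) u
  | s {t t₁ u : Lm} {b e : ℕ} :
      StepN .s t t₁ → RedCntN t₁ (b, e) u → RedCntN t (b, e + 1) u

/-- counted CBV reduction, recording the number of dB- and sv-steps -/
inductive RedCntV : Lm → ℕ × ℕ → Lm → Prop
  | refl (t : Lm) : RedCntV t (0, 0) t
  | db {t t₁ u : Lm} {b e : ℕ} :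
      StepV .dB t t₁ → RedCntV t₁ (b, e) u → RedCntV t (b + 1, e) u
  | sv {t t₁ u : Lm} {b e : ℕ} :
      StepV .sv t t₁ → RedCntV t₁ (b, e) u → RedCntV t (b, e + 1) u

/-- the CBN embedding into the λ!-calculus -/
def cbn : Lm → Tm
  | .var k => .var k
  | .lam t => .lam (cbn t)
  | .app t u => .app (cbn t) (.bang (cbn u))
  | .esub t u => .esub (cbn t) (.bang (cbn u))

/-- `deBang t = some s'` iff `t = L⟨!s⟩` and `s' = L⟨s⟩` -/
def deBang : Tm → Option Tm
  | .bang s => some s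
  | .esub t e => (deBang t).map (fun s => Tm.esub s e)
  | _ => none

/-- the CBV embedding into the λ!-calculus -/
def cbv : Lm → Tm
  | .var k => .bang (.var k)
  | .lam t => .bang (.lam (cbv t))
  | .app t u =>
      match deBang (cbv t) with
      | some r => Tm.app r (cbv u)
      | none => Tm.app (.der (cbv t)) (cbv u)
  | .esub t u => .esub (cbv t) (cbv u)

/-- Sized typing of system 𝒩 (call-by-name): `DerN Γ t τ n` means that there
is a derivation of `Γ ⊢ t : τ` of size `n` (counting all rules). -/
inductive DerN : Ctx → Lm → Ty → ℕ → Prop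
  | ax (k : ℕ) (σ : Ty) : DerN (Ctx.single k {σ}) (Lm.var k) σ 1
  | app {Γ : Ctx} {t u : Lm} {τ : Ty} {n : ℕ} (prs : List (Ctx × Ty × ℕ)) :
      DerN Γ t (Ty.arr (prs.map (·.2.1)) τ) n →
      (∀ p ∈ prs, DerN p.1 u p.2.1 p.2.2) →
      DerN (Γ + (prs.map (·.1)).sum) (Lm.app t u) τ
           (n + (prs.map (·.2.2)).sum + 1)
  | abs {Γ : Ctx} {t : Lm} {τ : Ty} {n : ℕ} (M : List Ty) :
      DerN Γ t τ n → Multiset.ofList M = Γ 0 →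
      DerN (Ctx.tail Γ) (Lm.lam t) (Ty.arr M τ) (n + 1)
  | es {Γ : Ctx} {t u : Lm} {τ : Ty} {n : ℕ} (prs : List (Ctx × Ty × ℕ)) :
      DerN Γ t τ n →
      Multiset.ofList (prs.map (·.2.1)) = Γ 0 →
      (∀ p ∈ prs, DerN p.1 u p.2.1 p.2.2) →
      DerN (Ctx.tail Γ + (prs.map (·.1)).sum) (Lm.esub t u) τ
           (n + (prs.map (·.2.2)).sum + 1)

/-- Sized typing of system 𝒱 (call-by-value): `DerV Γ t τ n` means that there
is a derivation of `Γ ⊢ t : τ` of size `n` (each rule counts 1, except that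
`ax` counts the cardinal of its multiset and `abs` contributes the sizes of
its premises plus the number of premises). -/
inductive DerV : Ctx → Lm → Ty → ℕ → Prop
  | ax (k : ℕ) (M : List Ty) :
      DerV (Ctx.single k (Multiset.ofList M)) (Lm.var k) (Ty.mult M) M.length
  | es {Γ Δ : Ctx} {t u : Lm} {σ : Ty} {M : List Ty} {n m : ℕ} :
      DerV Γ t σ n → DerV Δ u (Ty.mult M) m → Multiset.ofList M = Γ 0 →
      DerV (Ctx.tail Γ + Δ) (Lm.esub t u) σ (n + m + 1)
  | abs {t : Lm} (prs : List (Ctx × List Ty × Ty × ℕ)) :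
      (∀ p ∈ prs, DerV p.1 t p.2.2.1 p.2.2.2) →
      (∀ p ∈ prs, Multiset.ofList p.2.1 = p.1 0) →
      DerV ((prs.map (fun p => Ctx.tail p.1)).sum) (Lm.lam t)
           (Ty.mult (prs.map (fun p => Ty.arr p.2.1 p.2.2.1)))
           ((prs.map (·.2.2.2)).sum + prs.length)
  | app {Γ Δ : Ctx} {t u : Lm} {M : List Ty} {τ : Ty} {n m : ℕ} :
      DerV Γ t (Ty.mult [Ty.arr M τ]) n → DerV Δ u (Ty.mult M) m →
      DerV (Γ + Δ) (Lm.app t u) τ (n + m + 1)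

/-!
Every typing rule passes a size decrease of a premise on to its conclusion, so only root steps
matter. A root redex acts at a distance, through a list context `L`; commuting it past the
explicit substitutions of `L` (renaming its other subterm) keeps the size of a derivation, which
leaves redexes with an empty list context. There `dB` trades the `abs` and `app` rules for one
`es` rule and `d!` drops a `dr` rule. For `s!`, substituting `u` for a variable of type `[σᵢ]`
replaces its axioms by the derivations of `u : σᵢ` packed in the `bg` rule and removes the `es`
rule, so the size drops by at least one.
-/

open Function

namespace Tm

theorem liftR_injective {f : ℕ → ℕ} (hf : Injective f) : Injective (liftR f) := by
  rintro (_ | a) (_ | b) h <;> simp_all [liftR, hf.eq_iff]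

theorem liftR_id : liftR id = id := by
  funext k; cases k <;> rfl

theorem liftR_comp (f g : ℕ → ℕ) : liftR f ∘ liftR g = liftR (f ∘ g) := by
  funext k; cases k <;> rfl

theorem rename_id (t : Tm) : rename id t = t := by
  induction t <;> simp [rename, liftR_id, *]

theorem rename_rename (f g : ℕ → ℕ) (t : Tm) : rename f (rename g t) = rename (f ∘ g) t := by
  induction t generalizing f g <;> simp [rename, liftR_comp, *]

theorem liftS_comp_liftR (σ : ℕ → Tm) (f : ℕ → ℕ) : liftS σ ∘ liftR f = liftS (σ ∘ f) := by
  funext k; cases k <;> rfl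

theorem subst_rename (σ : ℕ → Tm) (f : ℕ → ℕ) (t : Tm) :
    subst σ (rename f t) = subst (σ ∘ f) t := by
  induction t generalizing σ f <;> simp [subst, rename, liftS_comp_liftR, *]

theorem substIn_eq_subst0_rename (n : ℕ) (u t : Tm) :
    substIn n u t = subst0 u (rename (liftR (· + n)) t) := by
  unfold subst0 substIn
  rw [subst_rename]
  congr 1
  funext k
  cases k <;> rfl

/-- `subst0 u` lifted under `j` binders. -/
def substAt (j : ℕ) (u : Tm) : ℕ → Tm := fun k =>
  if k < j then var k else if k = j then rename (· + j) u else var (k - 1)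

theorem liftS_substAt (j : ℕ) (u : Tm) : liftS (substAt j u) = substAt (j + 1) u := by
  funext k
  rcases k with _ | k
  · rfl
  simp only [liftS, substAt, Nat.add_lt_add_iff_right, Nat.add_right_cancel_iff]
  split_ifs with hlt heq
  · rfl
  · rw [rename_rename]; subst heq; rfl
  · simp only [rename, var.injEq]; omega

theorem subst0_eq_subst_substAt_zero (u t : Tm) : subst0 u t = subst (substAt 0 u) t := by
  unfold subst0 substIn
  congr 1
  funext k
  rcases k with _ | k
  · exact (rename_id u).symm
  · rfl

end Tm

theorem List.add_length_comp_add_one {α : Type*} (a : α) (l : List α) :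
    (· + l.length) ∘ (· + 1) = (· + (a :: l).length) := by
  funext k
  simp only [comp_apply, List.length_cons]
  omega

theorem Function.extend_eq_of_forall {α β γ : Type*} {f : α → β} (hf : Injective f)
    {g : α → γ} {e g' : β → γ} (hg : ∀ a, g' (f a) = g a) (he : ∀ b, (∀ a, f a ≠ b) → g' b = e b) :
    extend f g e = g' := by
  funext b
  by_cases hb : ∃ a, f a = b
  · obtain ⟨a, rfl⟩ := hb
    rw [hf.extend_apply, hg]
  · rw [extend_apply' _ _ _ hb, he b fun a ha => hb ⟨a, ha⟩]

namespace Ctx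

open Tm

def erase (j : ℕ) (Γ : Ctx) : Ctx := fun k => Γ (if k < j then k else k + 1)

theorem cons_add_cons (M N : Multiset Ty) (Γ Δ : Ctx) :
    cons M Γ + cons N Δ = cons (M + N) (Γ + Δ) := by
  funext k; cases k <;> rfl

theorem extend_add (f : ℕ → ℕ) (Γ Δ : Ctx) : extend f (Γ + Δ) 0 = extend f Γ 0 + extend f Δ 0 :=
  map_add (ExtendByZero.hom (Multiset Ty) f) Γ Δ

theorem extend_single {f : ℕ → ℕ} (hf : Injective f) (k : ℕ) (M : Multiset Ty) :
    extend f (single k M) 0 = single (f k) M := by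
  refine extend_eq_of_forall hf (fun a => by simp [single, hf.eq_iff]) fun b hb => ?_
  simp only [single, Pi.zero_apply, ite_eq_right_iff]
  rintro rfl
  exact absurd rfl (hb k)

theorem extend_liftR {f : ℕ → ℕ} (hf : Injective f) (Γ : Ctx) :
    extend (liftR f) Γ 0 = cons (Γ 0) (extend f (tail Γ) 0) := by
  refine extend_eq_of_forall (liftR_injective hf) ?_ ?_
  · rintro (_ | a)
    · rfl
    · exact hf.extend_apply (tail Γ) 0 a
  · rintro (_ | b) hb
    · exact absurd rfl (hb 0)
    · exact extend_apply' _ _ _ fun ⟨a, ha⟩ => hb (a + 1) (congrArg (· + 1) ha)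

theorem extend_add_zero (Δ : Ctx) : extend (· + 0) Δ 0 = Δ :=
  extend_eq_of_forall (add_left_injective 0) (fun _ => rfl) fun b hb => absurd rfl (hb b)

theorem extend_add_succ (j : ℕ) (Δ : Ctx) :
    extend (· + (j + 1)) Δ 0 = cons 0 (extend (· + j) Δ 0) := by
  refine extend_eq_of_forall (add_left_injective _) (fun a => ?_) ?_
  · exact (add_left_injective j).extend_apply Δ 0 a
  · rintro (_ | b) hb
    · rfl
    · exact extend_apply' _ _ _ fun ⟨a, ha⟩ => hb a (by omega)

theorem extend_add_one (Δ : Ctx) : extend (· + 1) Δ 0 = cons 0 Δ := by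
  rw [extend_add_succ 0, extend_add_zero]

theorem erase_add (j : ℕ) (Γ Δ : Ctx) : erase j (Γ + Δ) = erase j Γ + erase j Δ := rfl

theorem erase_zero (Γ : Ctx) : erase 0 Γ = tail Γ := rfl

theorem erase_succ (j : ℕ) (Γ : Ctx) : erase (j + 1) Γ = cons (Γ 0) (erase j (tail Γ)) := by
  funext k
  rcases k with _ | k
  · rfl
  · simp only [erase, cons, tail, Nat.add_lt_add_iff_right]
    split_ifs <;> rfl

theorem erase_single_self (j : ℕ) (M : Multiset Ty) : erase j (single j M) = 0 := by
  funext k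
  simp only [erase, single, Pi.zero_apply]
  split_ifs <;> first | rfl | omega

theorem erase_single_of_lt {j k : ℕ} (h : k < j) (M : Multiset Ty) :
    erase j (single k M) = single k M := by
  funext m
  simp only [erase, single]
  split_ifs <;> first | rfl | omega

theorem erase_single_of_gt {j k : ℕ} (h : j < k) (M : Multiset Ty) :
    erase j (single k M) = single (k - 1) M := by
  funext m
  simp only [erase, single]
  split_ifs <;> first | rfl | omega

end Ctx

theorem List.exists_perm_append_of_coe_map_eq_add {α β : Type*} {f : α → β} :
    ∀ {l : List α} {A B : Multiset β}, (l.map f : Multiset β) = A + B →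
      ∃ l₁ l₂, l.Perm (l₁ ++ l₂) ∧ (l₁.map f : Multiset β) = A ∧ (l₂.map f : Multiset β) = B
  | [], A, B, h => by
    obtain ⟨rfl, rfl⟩ := add_eq_zero.mp h.symm
    exact ⟨[], [], .nil, rfl, rfl⟩
  | x :: l, A, B, h => by
    rw [List.map_cons, ← Multiset.cons_coe] at h
    by_cases hx : f x ∈ A
    · obtain ⟨A, rfl⟩ := Multiset.exists_cons_of_mem hx
      rw [Multiset.cons_add, Multiset.cons_inj_right] at h
      obtain ⟨l₁, l₂, hl, rfl, rfl⟩ := exists_perm_append_of_coe_map_eq_add h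
      exact ⟨x :: l₁, l₂, hl.cons x, rfl, rfl⟩
    · have hx : f x ∈ B := (Multiset.mem_add.mp (h ▸ Multiset.mem_cons_self _ _)).resolve_left hx
      obtain ⟨B, rfl⟩ := Multiset.exists_cons_of_mem hx
      rw [Multiset.add_cons, Multiset.cons_inj_right] at h
      obtain ⟨l₁, l₂, hl, rfl, rfl⟩ := exists_perm_append_of_coe_map_eq_add h
      exact ⟨l₁, x :: l₂, (hl.cons x).trans List.perm_middle.symm, rfl, rfl⟩

namespace DerU

open Tm Ctx

theorem bang_nil (t : Tm) : DerU 0 (bang t) (.mult []) 0 :=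
  DerU.bg [] (by simp)

theorem bang_singleton_iff {Γ : Ctx} {t : Tm} {σ : Ty} {n : ℕ} :
    DerU Γ (bang t) (.mult [σ]) n ↔ DerU Γ t σ n := by
  constructor
  · intro h
    generalize hT : Ty.mult [σ] = T at h
    cases h with
    | bg prs hprs =>
      obtain ⟨p, rfl, rfl⟩ := List.map_eq_singleton_iff.mp (Ty.mult.inj hT).symm
      simpa using hprs p (List.mem_singleton_self p)
  · intro h
    simpa using DerU.bg [(Γ, σ, n)] (by simpa using h)

theorem eq_zero_of_bang_nil {Γ : Ctx} {t : Tm} {n : ℕ} (h : DerU Γ (bang t) (.mult []) n) :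
    Γ = 0 ∧ n = 0 := by
  generalize hT : Ty.mult [] = T at h
  cases h with
  | bg prs _ =>
    obtain rfl := List.map_eq_nil_iff.mp (Ty.mult.inj hT).symm
    exact ⟨rfl, rfl⟩

theorem bang_append {Γ₁ Γ₂ : Ctx} {t : Tm} {M₁ M₂ : List Ty} {n₁ n₂ : ℕ}
    (h₁ : DerU Γ₁ (bang t) (.mult M₁) n₁) (h₂ : DerU Γ₂ (bang t) (.mult M₂) n₂) :
    DerU (Γ₁ + Γ₂) (bang t) (.mult (M₁ ++ M₂)) (n₁ + n₂) := by
  cases h₁ with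
  | bg l₁ hl₁ =>
    cases h₂ with
    | bg l₂ hl₂ =>
      simpa using DerU.bg (l₁ ++ l₂) fun p hp => (List.mem_append.mp hp).elim (hl₁ p) (hl₂ p)

theorem bang_split {Δ : Ctx} {u : Tm} {M : List Ty} {q : ℕ} {A B : Multiset Ty}
    (h : DerU Δ (bang u) (.mult M) q) (hM : (M : Multiset Ty) = A + B) :
    ∃ (Δ₁ Δ₂ : Ctx) (M₁ M₂ : List Ty) (q₁ q₂ : ℕ), Δ = Δ₁ + Δ₂ ∧ q = q₁ + q₂ ∧
      (M₁ : Multiset Ty) = A ∧ (M₂ : Multiset Ty) = B ∧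
      DerU Δ₁ (bang u) (.mult M₁) q₁ ∧ DerU Δ₂ (bang u) (.mult M₂) q₂ := by
  cases h with
  | bg prs hprs =>
    obtain ⟨l₁, l₂, hl, rfl, rfl⟩ := List.exists_perm_append_of_coe_map_eq_add hM
    refine ⟨_, _, _, _, _, _, ?_, ?_, rfl, rfl,
      DerU.bg l₁ fun p hp => hprs p (hl.symm.subset (List.mem_append_left _ hp)),
      DerU.bg l₂ fun p hp => hprs p (hl.symm.subset (List.mem_append_right _ hp))⟩
    · rw [(hl.map _).sum_eq, List.map_append, List.sum_append]
    · rw [(hl.map _).sum_eq, List.map_append, List.sum_append]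

theorem rename {Γ : Ctx} {t : Tm} {τ : Ty} {p : ℕ} (h : DerU Γ t τ p) {f : ℕ → ℕ}
    (hf : Injective f) : DerU (extend f Γ 0) (t.rename f) τ p := by
  induction h generalizing f with
  | ax k σ => rw [extend_single hf]; exact .ax (f k) σ
  | app _ _ ih₁ ih₂ => rw [Ctx.extend_add]; exact .app (ih₁ hf) (ih₂ hf)
  | abs M _ hM ih =>
    have h' := ih (liftR_injective hf)
    rw [extend_liftR hf] at h'
    exact .abs M h' hM
  | es _ _ hM ih₁ ih₂ =>
    have h' := ih₁ (liftR_injective hf)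
    rw [extend_liftR hf] at h'
    rw [Ctx.extend_add]
    exact .es h' (ih₂ hf) hM
  | bg prs _ ih =>
    have h' := DerU.bg (prs.map fun p => (extend f p.1 0, p.2)) <| by
      simp only [List.mem_map]
      rintro _ ⟨p, hp, rfl⟩
      exact ih p hp hf
    have hsum : extend f (prs.map (·.1)).sum 0 = (prs.map fun p => extend f p.1 0).sum :=
      (map_list_sum (ExtendByZero.hom (Multiset Ty) f) _).trans (by rw [List.map_map]; rfl)
    rw [hsum]
    simp only [List.map_map, comp_def] at h'
    exact h'
  | dr _ ih => exact (ih hf).dr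

end DerU

open Tm Ctx in
/-- The derivation of `!u` gathers one derivation of `u : σᵢ` for each axiom typing the variable
`j` in the derivation of `Γ ⊢ t : σ` of size `p`. -/
def AdmitsSubst (u : Tm) (j : ℕ) (Γ : Ctx) (t : Tm) (σ : Ty) (p : ℕ) : Prop :=
  ∀ ⦃Δ : Ctx⦄ ⦃M : List Ty⦄ ⦃q : ℕ⦄, DerU Δ (bang u) (.mult M) q → (M : Multiset Ty) = Γ j →
    ∃ m, DerU (erase j Γ + extend (· + j) Δ 0) (t.subst (substAt j u)) σ m ∧ m ≤ p + q

namespace AdmitsSubst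

open Tm Ctx

variable {u : Tm} {j : ℕ}

theorem var (k : ℕ) (σ : Ty) : AdmitsSubst u j (single k {σ}) (var k) σ 1 := by
  intro Δ M q hΔ hM
  rcases lt_trichotomy k j with hkj | rfl | hkj
  · obtain rfl : M = [] := by simpa [single, hkj.ne'] using hM
    obtain ⟨rfl, rfl⟩ := hΔ.eq_zero_of_bang_nil
    refine ⟨1, ?_, le_rfl⟩
    simpa [erase_single_of_lt hkj, Tm.subst, substAt, hkj, extend_zero] using DerU.ax k σ
  · obtain rfl : M = [σ] := by simpa [single] using hM
    refine ⟨q, ?_, by omega⟩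
    simpa [erase_single_self, Tm.subst, substAt] using
      (DerU.bang_singleton_iff.mp hΔ).rename (add_left_injective k)
  · obtain rfl : M = [] := by simpa [single, hkj.ne] using hM
    obtain ⟨rfl, rfl⟩ := hΔ.eq_zero_of_bang_nil
    refine ⟨1, ?_, le_rfl⟩
    simpa [erase_single_of_gt hkj, Tm.subst, substAt, hkj.not_gt, hkj.ne', extend_zero] using
      DerU.ax (k - 1) σ

theorem app {Γ Γ' : Ctx} {t s : Tm} {M : List Ty} {τ : Ty} {n m : ℕ}
    (ht : AdmitsSubst u j Γ t (.arr M τ) n) (hs : AdmitsSubst u j Γ' s (.mult M) m) :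
    AdmitsSubst u j (Γ + Γ') (.app t s) τ (n + m + 1) := by
  intro Δ N q hΔ hN
  obtain ⟨Δ₁, Δ₂, N₁, N₂, q₁, q₂, rfl, rfl, hN₁, hN₂, hΔ₁, hΔ₂⟩ := hΔ.bang_split hN
  obtain ⟨m₁, h₁, hm₁⟩ := ht hΔ₁ hN₁
  obtain ⟨m₂, h₂, hm₂⟩ := hs hΔ₂ hN₂
  refine ⟨m₁ + m₂ + 1, ?_, by omega⟩
  rw [erase_add, Ctx.extend_add, add_add_add_comm]
  exact h₁.app h₂

theorem abs {Γ : Ctx} {t : Tm} {τ : Ty} {n : ℕ} (M : List Ty)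
    (ht : AdmitsSubst u (j + 1) Γ t τ n) (hM : (M : Multiset Ty) = Γ 0) :
    AdmitsSubst u j (tail Γ) (.lam t) (.arr M τ) (n + 1) := by
  intro Δ N q hΔ hN
  obtain ⟨m, h, hm⟩ := ht hΔ hN
  rw [erase_succ, extend_add_succ, cons_add_cons, add_zero] at h
  refine ⟨m + 1, ?_, by omega⟩
  rw [Tm.subst, liftS_substAt]
  exact h.abs M hM

theorem esub {Γ Γ' : Ctx} {t s : Tm} {σ : Ty} {M : List Ty} {n m : ℕ}
    (ht : AdmitsSubst u (j + 1) Γ t σ n) (hs : AdmitsSubst u j Γ' s (.mult M) m)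
    (hM : (M : Multiset Ty) = Γ 0) :
    AdmitsSubst u j (tail Γ + Γ') (.esub t s) σ (n + m + 1) := by
  intro Δ N q hΔ hN
  obtain ⟨Δ₁, Δ₂, N₁, N₂, q₁, q₂, rfl, rfl, hN₁, hN₂, hΔ₁, hΔ₂⟩ := hΔ.bang_split hN
  obtain ⟨m₁, h₁, hm₁⟩ := ht hΔ₁ hN₁
  obtain ⟨m₂, h₂, hm₂⟩ := hs hΔ₂ hN₂
  rw [erase_succ, extend_add_succ, cons_add_cons, add_zero] at h₁
  refine ⟨m₁ + m₂ + 1, ?_, by omega⟩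
  rw [erase_add, Ctx.extend_add, add_add_add_comm, Tm.subst, liftS_substAt]
  exact h₁.es h₂ hM

theorem bang {t : Tm} :
    ∀ prs : List (Ctx × Ty × ℕ), (∀ p ∈ prs, AdmitsSubst u j p.1 t p.2.1 p.2.2) →
      AdmitsSubst u j (prs.map (·.1)).sum (.bang t) (.mult (prs.map (·.2.1))) (prs.map (·.2.2)).sum
  | [], _ => by
    intro Δ N q hΔ hN
    obtain rfl : N = [] := by simpa using hN
    obtain ⟨rfl, rfl⟩ := hΔ.eq_zero_of_bang_nil
    exact ⟨0, by rw [extend_zero, add_zero]; exact DerU.bang_nil _, le_rfl⟩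
  | p :: prs, h => by
    intro Δ N q hΔ hN
    simp only [List.map_cons, List.sum_cons] at hN ⊢
    obtain ⟨Δ₁, Δ₂, N₁, N₂, q₁, q₂, rfl, rfl, hN₁, hN₂, hΔ₁, hΔ₂⟩ := hΔ.bang_split hN
    obtain ⟨m₁, h₁, hm₁⟩ := h p List.mem_cons_self hΔ₁ hN₁
    obtain ⟨m₂, h₂, hm₂⟩ := bang prs (fun p hp => h p (List.mem_cons_of_mem _ hp)) hΔ₂ hN₂
    refine ⟨m₁ + m₂, ?_, by omega⟩
    rw [erase_add, Ctx.extend_add, add_add_add_comm]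
    exact (DerU.bang_singleton_iff.mpr h₁).bang_append h₂

theorem der {Γ : Ctx} {t : Tm} {σ : Ty} {n : ℕ} (ht : AdmitsSubst u j Γ t (.mult [σ]) n) :
    AdmitsSubst u j Γ (.der t) σ (n + 1) := fun _ _ _ hΔ hN =>
  let ⟨m, h, hm⟩ := ht hΔ hN
  ⟨m + 1, h.dr, by omega⟩

end AdmitsSubst

namespace DerU

open Tm Ctx

theorem admitsSubst {Γ : Ctx} {t : Tm} {σ : Ty} {p : ℕ} (h : DerU Γ t σ p) (u : Tm) (j : ℕ) :
    AdmitsSubst u j Γ t σ p := by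
  induction h generalizing j with
  | ax k σ => exact .var k σ
  | app _ _ ih₁ ih₂ => exact (ih₁ j).app (ih₂ j)
  | abs M _ hM ih => exact .abs M (ih (j + 1)) hM
  | es _ _ hM ih₁ ih₂ => exact .esub (ih₁ (j + 1)) (ih₂ j) hM
  | bg prs _ ih => exact .bang prs fun p hp => ih p hp j
  | dr _ ih => exact (ih j).der

theorem subst0 {Γ Δ : Ctx} {t u : Tm} {σ : Ty} {M : List Ty} {p q : ℕ} (ht : DerU Γ t σ p)
    (hu : DerU Δ (bang u) (.mult M) q) (hM : (M : Multiset Ty) = Γ 0) :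
    ∃ m, DerU (tail Γ + Δ) (subst0 u t) σ m ∧ m ≤ p + q := by
  have h := ht.admitsSubst u 0 hu hM
  rwa [erase_zero, extend_add_zero, ← subst0_eq_subst_substAt_zero] at h

theorem app_plug : ∀ (L : List Tm) {Γ : Ctx} {s u : Tm} {τ : Ty} {n : ℕ},
    DerU Γ (Tm.app (plug L s) u) τ n → DerU Γ (plug L (Tm.app s (u.rename (· + L.length)))) τ n
  | [], Γ, s, u, τ, n, h => by
    change DerU Γ (Tm.app s (u.rename id)) τ n
    rwa [rename_id]
  | e :: L, _, s, u, _, _, h => by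
    cases h with
    | @app _ Δ _ _ _ _ _ q h₁ hu =>
      cases h₁ with
      | @es Γ₁ Δₑ _ _ _ _ n₁ nₑ h₁ hₑ hM =>
        have hu' := hu.rename (add_left_injective 1)
        rw [extend_add_one] at hu'
        have h' := app_plug L (h₁.app hu')
        rw [rename_rename, List.add_length_comp_add_one e L] at h'
        rw [add_right_comm (tail Γ₁), show n₁ + nₑ + 1 + q + 1 = n₁ + q + 1 + nₑ + 1 by omega]
        exact h'.es hₑ (by rw [hM]; exact (add_zero _).symm)

theorem esub_plug : ∀ (L : List Tm) {Γ : Ctx} {t s : Tm} {σ : Ty} {n : ℕ},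
    DerU Γ (Tm.esub t (plug L s)) σ n →
      DerU Γ (plug L (Tm.esub (t.rename (liftR (· + L.length))) s)) σ n
  | [], Γ, t, s, σ, n, h => by
    change DerU Γ (Tm.esub (t.rename (liftR id)) s) σ n
    rwa [liftR_id, rename_id]
  | e :: L, _, t, s, _, _, h => by
    cases h with
    | @es Γ _ _ _ _ _ n _ ht h₂ hM =>
      cases h₂ with
      | @es Δ Δₑ _ _ _ _ q qₑ h₂ hₑ hMₑ =>
        have ht' := ht.rename (liftR_injective (add_left_injective 1))
        rw [extend_liftR (add_left_injective 1), extend_add_one] at ht'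
        have h' := esub_plug L (ht'.es h₂ hM)
        rw [rename_rename, liftR_comp, List.add_length_comp_add_one e L] at h'
        rw [← add_assoc, show n + (q + qₑ + 1) + 1 = n + q + 1 + qₑ + 1 by omega]
        exact h'.es hₑ (by rw [hMₑ]; exact (zero_add _).symm)

theorem der_plug : ∀ (L : List Tm) {Γ : Ctx} {s : Tm} {σ : Ty} {n : ℕ},
    DerU Γ (Tm.der (plug L s)) σ n → DerU Γ (plug L (Tm.der s)) σ n
  | [], _, _, _, _, h => h
  | e :: L, _, _, _, _, h => by
    cases h with
    | dr h =>
      cases h with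
      | @es _ _ _ _ _ _ n nₑ h hₑ hM =>
        rw [show n + nₑ + 1 + 1 = n + 1 + nₑ + 1 by omega]
        exact (der_plug L h.dr).es hₑ hM

end DerU

def Shrinks (s s' : Tm) : Prop :=
  ∀ ⦃Γ : Ctx⦄ ⦃τ : Ty⦄ ⦃n : ℕ⦄, DerU Γ s τ n → ∃ m, DerU Γ s' τ m ∧ m < n

namespace Shrinks

open Tm

variable {s s' : Tm}

theorem app_left (h : Shrinks s s') (u : Tm) : Shrinks (.app s u) (.app s' u) := by
  intro Γ τ n hd
  cases hd with
  | app h₁ h₂ =>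
    obtain ⟨m, h₁', hm⟩ := h h₁
    exact ⟨_, h₁'.app h₂, by omega⟩

theorem app_right (h : Shrinks s s') (t : Tm) : Shrinks (.app t s) (.app t s') := by
  intro Γ τ n hd
  cases hd with
  | app h₁ h₂ =>
    obtain ⟨m, h₂', hm⟩ := h h₂
    exact ⟨_, h₁.app h₂', by omega⟩

theorem lam (h : Shrinks s s') : Shrinks (.lam s) (.lam s') := by
  intro Γ τ n hd
  cases hd with
  | abs M h₁ hM =>
    obtain ⟨m, h₁', hm⟩ := h h₁
    exact ⟨_, h₁'.abs M hM, by omega⟩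

theorem der (h : Shrinks s s') : Shrinks (.der s) (.der s') := by
  intro Γ τ n hd
  cases hd with
  | dr h₁ =>
    obtain ⟨m, h₁', hm⟩ := h h₁
    exact ⟨_, h₁'.dr, by omega⟩

theorem esub_left (h : Shrinks s s') (u : Tm) : Shrinks (.esub s u) (.esub s' u) := by
  intro Γ τ n hd
  cases hd with
  | es h₁ h₂ hM =>
    obtain ⟨m, h₁', hm⟩ := h h₁
    exact ⟨_, h₁'.es h₂ hM, by omega⟩

theorem esub_right (h : Shrinks s s') (t : Tm) : Shrinks (.esub t s) (.esub t s') := by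
  intro Γ τ n hd
  cases hd with
  | es h₁ h₂ hM =>
    obtain ⟨m, h₂', hm⟩ := h h₂
    exact ⟨_, h₁.es h₂' hM, by omega⟩

theorem plug (h : Shrinks s s') : ∀ L : List Tm, Shrinks (plug L s) (plug L s')
  | [] => h
  | e :: L => (plug h L).esub_left e

theorem app_lam (t u : Tm) : Shrinks (.app (.lam t) u) (.esub t u) := by
  intro Γ τ n hd
  cases hd with
  | app h₁ h₂ =>
    cases h₁ with
    | abs M h₁ hM => exact ⟨_, h₁.es h₂ hM, by omega⟩

theorem esub_bang (t u : Tm) : Shrinks (.esub t (.bang u)) (subst0 u t) := by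
  intro Γ τ n hd
  cases hd with
  | es h₁ h₂ hM =>
    obtain ⟨m, h, hm⟩ := h₁.subst0 h₂ hM
    exact ⟨m, h, by omega⟩

theorem der_bang (t : Tm) : Shrinks (.der (.bang t)) t := by
  intro Γ τ n hd
  cases hd with
  | dr h => exact ⟨_, DerU.bang_singleton_iff.mp h, by omega⟩

end Shrinks

theorem Root.shrinks {r : Rule} {t t' : Tm} : Root r t t' → Shrinks t t'
  | .dB L t u => fun _ _ _ h => (Shrinks.app_lam t _).plug L (h.app_plug L)
  | .sb L t u => by
    rw [Tm.substIn_eq_subst0_rename]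
    exact fun _ _ _ h => (Shrinks.esub_bang _ u).plug L (h.esub_plug L)
  | .db L t => fun _ _ _ h => (Shrinks.der_bang t).plug L (h.der_plug L)

theorem Step.shrinks {r : Rule} {t t' : Tm} (h : Step r t t') : Shrinks t t' := by
  induction h with
  | root h => exact h.shrinks
  | appL u _ ih => exact ih.app_left u
  | appR t _ ih => exact ih.app_right t
  | lam _ ih => exact ih.lam
  | der _ ih => exact ih.der
  | esubL u _ ih => exact ih.esub_left u
  | esubR t _ ih => exact ih.esub_right t

/-- **Weighted subject reduction for system 𝒰** (Lemma 7): if `Γ ⊢ t : τ` has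
a derivation of size `n` and `t →w t'`, then `Γ ⊢ t' : τ` has a derivation of
size `m < n`. -/
theorem weighted_subject_reduction {Γ : Ctx} {t t' : Tm} {τ : Ty} {n : ℕ}
    (h : DerU Γ t τ n) (hs : StepW t t') :
    ∃ m : ℕ, DerU Γ t' τ m ∧ m < n := by
  obtain ⟨_, hs⟩ := hs
  exact hs.shrinks h
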